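/- arXiv:2005.08731 — 4 statements merged into one kernel-verified Lean document; each statement's English description precedes it below -/
import Mathlib

section
/- Let G be a finite directed acyclic graph containing three distinguished vertices b, g, v with edges v→g, v→b and b→g. Let G₁ be G with the edge b→g removed, and G₂ be G with the edges v→b and b→g removed and the edge g→b added. Then the number of topological orderings satisfies topo(G) = topo(G₁) − topo(G₂). -/
/-- The number of topological orderings of a digraph with edge relation `E` on the
finite vertex type `V`: bijections `f : V ≃ Fin |V|` with `f u > f v` for each
edge `u → v`. -/
noncomputable def topo {V : Type*} [Fintype V] (E : V → V → Prop) : ℕ :=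
  Nat.card {f : V ≃ Fin (Fintype.card V) // ∀ u v, E u v → f v < f u}

/-!
Every ordering of `G₁` puts `b` either above or below `g`, so `topo G₁` is the number of
orderings of `G₁ + (b→g) = G` plus the number of orderings of `G₁ + (g→b)`. In the latter graph
the edge `v→b` is implied by the path `v→g→b`, and dropping an edge that is implied by a path
does not change the set of orderings; what remains is `G₂`.
-/

open Relation

def IsTopoOrder {V α : Type*} [Preorder α] (E : V → V → Prop) (f : V → α) : Prop :=
  ∀ u w, E u w → f w < f u

section IsTopoOrder

variable {V α : Type*} [Preorder α] {E E' : V → V → Prop} {f : V → α}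

theorem IsTopoOrder.transGen (hf : IsTopoOrder E f) : IsTopoOrder (TransGen E) f := by
  intro u w huw
  induction huw with
  | single h => exact hf _ _ h
  | tail _ h ih => exact (hf _ _ h).trans ih

theorem IsTopoOrder.of_le_transGen (hf : IsTopoOrder E f) (h : ∀ u w, E' u w → TransGen E u w) :
    IsTopoOrder E' f :=
  fun u w huw => hf.transGen u w (h u w huw)

end IsTopoOrder

section topo

variable {V : Type*} [Fintype V]

theorem topo_eq_card_isTopoOrder (E : V → V → Prop) :
    topo E = Nat.card {f : V ≃ Fin (Fintype.card V) // IsTopoOrder E f} :=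
  rfl

theorem topo_congr_of_le_transGen {E E' : V → V → Prop} (h : ∀ u w, E u w → TransGen E' u w)
    (h' : ∀ u w, E' u w → TransGen E u w) : topo E = topo E' := by
  simp only [topo_eq_card_isTopoOrder]
  exact Nat.card_congr <| Equiv.subtypeEquivRight fun f =>
    ⟨fun hf => hf.of_le_transGen h', fun hf => hf.of_le_transGen h⟩

theorem topo_eq_topo_add_edge_add_topo_add_edge (E : V → V → Prop) {b g : V} (hbg : b ≠ g) :
    topo E =
      topo (fun x y => E x y ∨ x = b ∧ y = g) + topo (fun x y => E x y ∨ x = g ∧ y = b) := by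
  classical
  simp only [topo_eq_card_isTopoOrder]
  have hsplit : ∀ f : V ≃ Fin (Fintype.card V), IsTopoOrder E f ↔
      IsTopoOrder (fun x y => E x y ∨ x = b ∧ y = g) f ∨
        IsTopoOrder (fun x y => E x y ∨ x = g ∧ y = b) f := by
    intro f
    constructor
    · intro hf
      rcases lt_or_gt_of_ne (f.injective.ne hbg.symm) with hlt | hgt
      · left
        rintro u w (huw | ⟨rfl, rfl⟩)
        exacts [hf u w huw, hlt]
      · right
        rintro u w (huw | ⟨rfl, rfl⟩)
        exacts [hf u w huw, hgt]
    · rintro (hf | hf) u w huw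
      exacts [hf u w (Or.inl huw), hf u w (Or.inl huw)]
  have hdisj : Disjoint
      (fun f : V ≃ Fin (Fintype.card V) => IsTopoOrder (fun x y => E x y ∨ x = b ∧ y = g) f)
      (fun f => IsTopoOrder (fun x y => E x y ∨ x = g ∧ y = b) f) := by
    rw [Pi.disjoint_iff]
    intro f
    rw [Prop.disjoint_iff]
    rintro ⟨hb, hg⟩
    exact (hb b g (Or.inr ⟨rfl, rfl⟩)).asymm (hg g b (Or.inr ⟨rfl, rfl⟩))
  rw [Nat.card_congr (Equiv.subtypeEquivRight hsplit), Nat.card_congr (subtypeOrEquiv _ _ hdisj),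
    Nat.card_sum]

end topo

theorem topo_trick_general {V : Type*} [Fintype V] (E : V → V → Prop)
    (b g v : V) (hbg : b ≠ g) (hbv : b ≠ v)
    (hvg : E v g) (hEbg : E b g) :
    (topo E : ℤ) =
      topo (fun x y => E x y ∧ ¬(x = b ∧ y = g)) -
        topo (fun x y =>
          (E x y ∧ ¬(x = b ∧ y = g) ∧ ¬(x = v ∧ y = b)) ∨ (x = g ∧ y = b)) := by
  set E₁ := fun x y => E x y ∧ ¬(x = b ∧ y = g)
  set E₂ := fun x y => (E x y ∧ ¬(x = b ∧ y = g) ∧ ¬(x = v ∧ y = b)) ∨ (x = g ∧ y = b)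
  have hE : (fun x y => E₁ x y ∨ x = b ∧ y = g) = E := by
    ext x y
    constructor
    · rintro (⟨h, -⟩ | ⟨rfl, rfl⟩)
      exacts [h, hEbg]
    · intro h
      exact (em (x = b ∧ y = g)).symm.imp (⟨h, ·⟩) id
  have hvgb : TransGen E₂ v b :=
    .tail (.single (Or.inl ⟨hvg, fun h => hbv h.1.symm, fun h => hbg h.2.symm⟩)) (Or.inr ⟨rfl, rfl⟩)
  have hE₂ : topo (fun x y => E₁ x y ∨ x = g ∧ y = b) = topo E₂ := by
    refine topo_congr_of_le_transGen ?_ fun u w h => .single ?_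
    · rintro u w (⟨huw, hbg'⟩ | hgb)
      · by_cases hvb' : u = v ∧ w = b
        · obtain ⟨rfl, rfl⟩ := hvb'
          exact hvgb
        · exact .single (Or.inl ⟨huw, hbg', hvb'⟩)
      · exact .single (Or.inr hgb)
    · rcases h with ⟨huw, hbg', -⟩ | hgb
      exacts [Or.inl ⟨huw, hbg'⟩, Or.inr hgb]
  rw [topo_eq_topo_add_edge_add_topo_add_edge E₁ hbg, hE, hE₂]
  push_cast
  ring

/-- Lemma `lemmaTrickOne`: if a finite DAG `G` has three distinct vertices `b, g, v`
with edges `v→g`, `v→b`, `b→g`, and `G₁` is `G` without the edge `b→g`, while `G₂`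
is `G` without `v→b` and `b→g` but with `g→b` instead, then
`topo(G) = topo(G₁) − topo(G₂)`. -/
theorem topo_trick {V : Type*} [Fintype V] [DecidableEq V] (E : V → V → Prop)
    (hacyc : ∀ x : V, ¬ Relation.TransGen E x x)
    (b g v : V) (hbg : b ≠ g) (hbv : b ≠ v) (hgv : g ≠ v)
    (hvg : E v g) (hvb : E v b) (hEbg : E b g) :
    (topo E : ℤ) =
      topo (fun x y => E x y ∧ ¬(x = b ∧ y = g)) -
        topo (fun x y =>
          (E x y ∧ ¬(x = b ∧ y = g) ∧ ¬(x = v ∧ y = b)) ∨ (x = g ∧ y = b)) :=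
  topo_trick_general E b g v hbg hbv hvg hEbg
end

section
/- Let α₁,…,αₙ ≥ 0 be integers, m = Σαᵢ, and x₁,…,xₙ elements of a commutative ring. Form the m×m block matrix whose block for index i is the αᵢ×m matrix with (r,s)-entry C(s−1, r−1)·xᵢ^{s−r} (the (r−1)-th derivative divided by (r−1)! of x^{s−1} evaluated at xᵢ), rows r = 1,…,αᵢ and columns s = 1,…,m. Then the determinant of this matrix equals ∏_{i<j} (xⱼ − xᵢ)^{αᵢ·αⱼ}. -/
/-!
Label the rows, give row `r` the node `z_r` of its label and let `k_r` count the earlier rows with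
the same label. Row `r` of the matrix is the functional `f ↦ (taylor z_r f).coeff k_r` (a Hasse
derivative at `z_r`) evaluated on the monomials `X ^ s`. Multiplying on the right by the
unitriangular matrix whose column `c` holds the coefficients of the Newton polynomial
`∏_{t < c} (X - z_t)` therefore replaces the monomials by Newton polynomials. A Newton polynomial
of a later column is divisible by `(X - z_r) ^ (k_r + 1)`, so the product is lower triangular; its
diagonal entry at `r` is the value at `z_r` of the `r`-th Newton polynomial with its factor
`(X - z_r) ^ k_r` removed, that is, the product of `z_r - z_t` over the earlier rows `t` with a
different label. Nothing here needs the rows with equal labels to be adjacent.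
-/

namespace ConfluentVandermonde

open Polynomial Finset

variable {R : Type*} [CommRing R]

theorem taylor_coeff_X_pow (a : R) (s k : ℕ) :
    (taylor a (X ^ s)).coeff k = (s.choose k : R) * a ^ (s - k) := by
  rw [taylor_X_pow, coeff_X_add_C_pow, mul_comm]

theorem taylor_coeff_X_sub_C_pow_mul (a : R) (j k : ℕ) (Q : R[X]) :
    (taylor a ((X - C a) ^ j * Q)).coeff k =
      if j ≤ k then (taylor a Q).coeff (k - j) else 0 := by
  rw [taylor_mul, taylor_pow, map_sub, taylor_X, taylor_C, add_sub_cancel_right,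
    coeff_X_pow_mul']

theorem sum_taylor_coeff_X_pow_mul_coeff {m : ℕ} {f : R[X]} (hf : f.natDegree < m)
    (a : R) (k : ℕ) :
    ∑ s : Fin m, (taylor a (X ^ (s : ℕ))).coeff k * f.coeff s = (taylor a f).coeff k := by
  conv_rhs => rw [f.as_sum_range' m hf]
  rw [Fin.sum_univ_eq_sum_range (fun s => (taylor a (X ^ s)).coeff k * f.coeff s)]
  simp [taylor_monomial, coeff_C_mul, mul_comm]

variable {m : ℕ}

noncomputable def newtonPoly (y : Fin m → R) (c : Fin m) : R[X] :=
  ∏ t ∈ Iio c, (X - C (y t))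

theorem monic_newtonPoly (y : Fin m → R) (c : Fin m) : (newtonPoly y c).Monic :=
  monic_prod_of_monic _ _ fun t _ => monic_X_sub_C (y t)

theorem natDegree_newtonPoly [Nontrivial R] (y : Fin m → R) (c : Fin m) :
    (newtonPoly y c).natDegree = c := by
  simp [newtonPoly, natDegree_prod_of_monic _ _ fun t _ => monic_X_sub_C (y t)]

section Labels

variable {β : Type*} [DecidableEq β] (b : Fin m → β)

def labelRank (r : Fin m) : ℕ := #{t ∈ Iio r | b t = b r}

theorem newtonPoly_comp_eq_pow_mul (x : β → R) (c : Fin m) (l : β) :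
    newtonPoly (x ∘ b) c = (X - C (x l)) ^ #{t ∈ Iio c | b t = l} *
      ∏ t ∈ Iio c with b t ≠ l, (X - C (x (b t))) := by
  rw [newtonPoly, ← prod_filter_mul_prod_filter_not (Iio c) (fun t => b t = l), ← prod_const]
  congr 1
  exact prod_congr rfl fun t ht => by rw [Function.comp_apply, (mem_filter.1 ht).2]

theorem labelRank_lt {r c : Fin m} (hrc : r < c) :
    labelRank b r < #{t ∈ Iio c | b t = b r} := by
  refine card_lt_card ⟨fun t ht => ?_, fun h => ?_⟩
  · simp only [mem_filter, mem_Iio] at ht ⊢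
    exact ⟨ht.1.trans hrc, ht.2⟩
  · simpa using h (mem_filter.2 ⟨mem_Iio.2 hrc, rfl⟩)

theorem det_confluent_of_labels (x : β → R) :
    (Matrix.of fun r s : Fin m =>
      ((s : ℕ).choose (labelRank b r) : R) * x (b r) ^ ((s : ℕ) - labelRank b r)).det =
      ∏ r, ∏ t ∈ Iio r with b t ≠ b r, (x (b r) - x (b t)) := by
  nontriviality R
  set M := Matrix.of fun r s : Fin m =>
    ((s : ℕ).choose (labelRank b r) : R) * x (b r) ^ ((s : ℕ) - labelRank b r)
  set N : Matrix (Fin m) (Fin m) R := Matrix.of fun s c => (newtonPoly (x ∘ b) c).coeff s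
  have hupper : N.IsUpperTriangular := fun s c hcs =>
    coeff_eq_zero_of_natDegree_lt ((natDegree_newtonPoly (x ∘ b) c).trans_lt hcs)
  have hN : N.det = 1 := by
    rw [Matrix.det_of_isUpperTriangular hupper]
    refine prod_eq_one fun c _ => ?_
    have := (monic_newtonPoly (x ∘ b) c).coeff_natDegree
    rwa [natDegree_newtonPoly] at this
  have hMN : ∀ r c, (M * N) r c =
      (taylor (x (b r)) (newtonPoly (x ∘ b) c)).coeff (labelRank b r) := fun r c => by
    rw [← sum_taylor_coeff_X_pow_mul_coeff (by rw [natDegree_newtonPoly]; exact c.isLt)]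
    simp only [M, N, Matrix.mul_apply, Matrix.of_apply, taylor_coeff_X_pow]
  have hlower : (M * N).IsLowerTriangular := fun r c hcr => by
    rw [hMN, newtonPoly_comp_eq_pow_mul b x c (b r), taylor_coeff_X_sub_C_pow_mul]
    exact if_neg (labelRank_lt b (OrderDual.toDual_lt_toDual.mp hcr)).not_ge
  have hdiag : ∀ r, (M * N) r r = ∏ t ∈ Iio r with b t ≠ b r, (x (b r) - x (b t)) := by
    intro r
    rw [hMN, newtonPoly_comp_eq_pow_mul b x r (b r), taylor_coeff_X_sub_C_pow_mul, labelRank,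
      if_pos le_rfl, Nat.sub_self, taylor_coeff_zero, eval_prod]
    simp
  calc M.det = (M * N).det := by rw [Matrix.det_mul, hN, mul_one]
    _ = _ := by
      rw [Matrix.det_of_isLowerTriangular _ hlower]
      exact prod_congr rfl fun r _ => hdiag r

end Labels

theorem prod_sigma_prod_sigma_fst {ι : Type*} [Fintype ι] {κ : ι → Type*}
    [∀ i, Fintype (κ i)] {M : Type*} [CommMonoid M] (g : ι → ι → M) :
    ∏ p : Σ i, κ i, ∏ q : Σ i, κ i, g p.1 q.1 =
      ∏ i, ∏ j, g i j ^ (Fintype.card (κ i) * Fintype.card (κ j)) := by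
  simp only [Fintype.prod_sigma, prod_const, card_univ, ← prod_pow, ← pow_mul, mul_comm]

section Blocks

variable {n : ℕ} {α : Fin n → ℕ}

def IsLexMono (e : (Σ i : Fin n, Fin (α i)) ≃ Fin m) : Prop :=
  ∀ p q : Σ i : Fin n, Fin (α i),
    ((p.1 : ℕ) < q.1 ∨ ((p.1 : ℕ) = q.1 ∧ (p.2 : ℕ) < q.2)) → e p < e q

variable {e : (Σ i : Fin n, Fin (α i)) ≃ Fin m}

theorem IsLexMono.lt_iff (he : IsLexMono e) (p q : Σ i : Fin n, Fin (α i)) :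
    e p < e q ↔ ((p.1 : ℕ) < q.1 ∨ ((p.1 : ℕ) = q.1 ∧ (p.2 : ℕ) < q.2)) := by
  refine ⟨fun hpq => ?_, he p q⟩
  rcases lt_trichotomy (p.1 : ℕ) q.1 with h₁ | h₁ | h₁
  · exact Or.inl h₁
  · rcases lt_trichotomy (p.2 : ℕ) q.2 with h₂ | h₂ | h₂
    · exact Or.inr ⟨h₁, h₂⟩
    · have hfst : p.1 = q.1 := Fin.ext h₁
      have : p = q := Sigma.ext hfst ((Fin.heq_ext_iff (congrArg α hfst)).2 h₂)
      exact absurd hpq (this ▸ lt_irrefl _)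
    · exact absurd (he q p (Or.inr ⟨h₁.symm, h₂⟩)) hpq.asymm
  · exact absurd (he q p (Or.inl h₁)) hpq.asymm

theorem IsLexMono.labelRank_apply (he : IsLexMono e) (p : Σ i : Fin n, Fin (α i)) :
    labelRank (fun r => (e.symm r).1) (e p) = p.2 := by
  obtain ⟨i, k⟩ := p
  rw [labelRank, ← Fin.card_Iio k]
  refine (card_bij (fun l _ => e ⟨i, l⟩) (fun l hl => ?_) (fun l _ l' _ h => ?_)
    fun t ht => ?_).symm
  · simpa using he ⟨i, l⟩ ⟨i, k⟩ (Or.inr ⟨rfl, Fin.lt_def.1 (mem_Iio.1 hl)⟩)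
  · simpa using e.injective h
  · obtain ⟨⟨j, l⟩, rfl⟩ := e.surjective t
    simp only [mem_filter, mem_Iio, Equiv.symm_apply_apply] at ht
    obtain ⟨hlt, rfl⟩ := ht
    rw [he.lt_iff] at hlt
    exact ⟨l, mem_Iio.2 (by simpa using hlt), rfl⟩

theorem IsLexMono.prod_Iio_filter_ne (he : IsLexMono e) (x : Fin n → R) :
    ∏ r, ∏ t ∈ Iio r with (e.symm t).1 ≠ (e.symm r).1, (x (e.symm r).1 - x (e.symm t).1) =
      ∏ p ∈ univ.filter (fun p : Fin n × Fin n => p.1 < p.2),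
        (x p.2 - x p.1) ^ (α p.1 * α p.2) := by
  have hblock : ∀ p q, (e q < e p ∧ q.1 ≠ p.1) ↔ q.1 < p.1 := fun p q => by
    rw [he.lt_iff, Fin.lt_def, Ne, Fin.ext_iff]
    omega
  calc ∏ r, ∏ t ∈ Iio r with (e.symm t).1 ≠ (e.symm r).1, (x (e.symm r).1 - x (e.symm t).1)
      = ∏ p : Σ i : Fin n, Fin (α i), ∏ q : Σ i : Fin n, Fin (α i),
          if q.1 < p.1 then x p.1 - x q.1 else 1 := by
        rw [← e.prod_comp]
        refine prod_congr rfl fun p _ => ?_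
        have hIio : {t ∈ Iio (e p) | (e.symm t).1 ≠ (e.symm (e p)).1} =
            (univ.filter fun q : Σ i : Fin n, Fin (α i) => q.1 < p.1).map e.toEmbedding := by
          ext t
          obtain ⟨q, rfl⟩ := e.surjective t
          simp [hblock]
        rw [hIio, prod_map, prod_filter]
        simp
    _ = ∏ i, ∏ j, (if j < i then x i - x j else 1) ^ (α i * α j) := by
        simpa using prod_sigma_prod_sigma_fst (κ := fun i => Fin (α i))
          fun i j => if j < i then x i - x j else 1
    _ = _ := by
        rw [prod_filter, Fintype.prod_prod_type, prod_comm]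
        refine prod_congr rfl fun i _ => prod_congr rfl fun j _ => ?_
        split_ifs <;> simp [mul_comm]

end Blocks

end ConfluentVandermonde

theorem confluent_vandermonde_general {R : Type*} [CommRing R] {n : ℕ} (α : Fin n → ℕ)
    (m : ℕ) (x : Fin n → R)
    (e : (Σ i : Fin n, Fin (α i)) ≃ Fin m)
    (he : ∀ a b : Σ i : Fin n, Fin (α i),
      ((a.1 : ℕ) < b.1 ∨ ((a.1 : ℕ) = b.1 ∧ (a.2 : ℕ) < (b.2 : ℕ))) → e a < e b) :
    (Matrix.of fun r s : Fin m =>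
        ((s : ℕ).choose ((e.symm r).2 : ℕ) : R) *
          x (e.symm r).1 ^ ((s : ℕ) - ((e.symm r).2 : ℕ))).det =
      ∏ p ∈ Finset.univ.filter (fun p : Fin n × Fin n => p.1 < p.2),
        (x p.2 - x p.1) ^ (α p.1 * α p.2) := by
  have hlex : ConfluentVandermonde.IsLexMono e := he
  have hrank : ∀ r,
      ((e.symm r).2 : ℕ) = ConfluentVandermonde.labelRank (fun r => (e.symm r).1) r :=
    fun r => by simpa using (hlex.labelRank_apply (e.symm r)).symm
  simp only [hrank]
  rw [ConfluentVandermonde.det_confluent_of_labels, hlex.prod_Iio_filter_ne]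

/-- The generalised (confluent) Vandermonde determinant: the `m×m` matrix (rows ordered
block by block via any equivalence `e` respecting the lexicographic block order) whose
block for `xᵢ` has rows the divided derivatives of `(1, x, x², …, x^{m−1})` at `xᵢ`,
i.e. `(r,s)`-entry `C(s−1, r−1)·xᵢ^{s−r}` (1-based; zero for `s < r`), has determinant
`∏_{i<j} (xⱼ − xᵢ)^{αᵢαⱼ}`. -/
theorem confluent_vandermonde {R : Type*} [CommRing R] {n : ℕ} (α : Fin n → ℕ)
    (m : ℕ) (hm : m = ∑ i, α i) (x : Fin n → R)
    (e : (Σ i : Fin n, Fin (α i)) ≃ Fin m)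
    (he : ∀ a b : Σ i : Fin n, Fin (α i),
      ((a.1 : ℕ) < b.1 ∨ ((a.1 : ℕ) = b.1 ∧ (a.2 : ℕ) < (b.2 : ℕ))) → e a < e b) :
    (Matrix.of fun r s : Fin m =>
        ((s : ℕ).choose ((e.symm r).2 : ℕ) : R) *
          x (e.symm r).1 ^ ((s : ℕ) - ((e.symm r).2 : ℕ))).det =
      ∏ p ∈ Finset.univ.filter (fun p : Fin n × Fin n => p.1 < p.2),
        (x p.2 - x p.1) ^ (α p.1 * α p.2) :=
  confluent_vandermonde_general α m x e he
end

section
/- Let f(t) be a formal power series over a commutative ring with f(0) = 1. Fix integers α₁,…,αₙ ≥ 1 with m = Σαᵢ, and elements x₁,…,xₙ. Let M(α, m, x) be the α×m matrix with (i,j)-entry equal to the coefficient of t^{j−i} in f(t)/(1−tx)^i. Then the determinant of the m×m matrix obtained by stacking the blocks M(α₁,m,x₁),…,M(αₙ,m,xₙ) equals ∏_{i<j} (xⱼ − xᵢ)^{αᵢ·αⱼ}. -/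
/-!
Since `1/(1 - t x)^(p+1) = ∑_c (c choose p) x^(c-p) t^(c-p)`, the matrix factors as `V * T`,
where `T` is the upper triangular Toeplitz matrix of `f` (with diagonal `f(0) = 1`) and `V` is
the confluent Vandermonde matrix, whose row `(i, p)` lists the `p`-th Hasse derivatives at `xᵢ`
of `1, X, …, X^(m-1)`. Replacing the monomials by the Hermite–Newton basis
`(X - xᵢ)^p ∏_{k<i} (X - x_k)^(α_k)`, a unitriangular change of basis, makes `V` lower
triangular with diagonal entries `∏_{k<i} (xᵢ - x_k)^(α_k)`.
-/

namespace Matrix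
variable {R : Type*} [CommRing R]

/-- Row `r` holds the `P r`-th Hasse derivatives at `y r` of `1, X, …, X^(m-1)`;
for `P = 0` this is `Matrix.vandermonde y`. -/
noncomputable def confluentVandermonde {m : ℕ} (y : Fin m → R) (P : Fin m → ℕ) :
    Matrix (Fin m) (Fin m) R :=
  of fun r c => ((c : ℕ).choose (P r) : R) * y r ^ ((c : ℕ) - P r)

end Matrix

namespace PowerSeries
variable {R : Type*} [CommRing R]

theorem coeff_X_pow_mul_mk_pow_pow (a : R) (p s : ℕ) :
    coeff s (X ^ p * (mk fun d => a ^ d) ^ (p + 1)) = (s.choose p : R) * a ^ (s - p) := by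
  have hgeom : (mk fun d => a ^ d) = rescale a (mk 1) := by simp [rescale_mk]
  rw [coeff_X_pow_mul', hgeom, ← map_pow, mk_one_pow_eq_mk_choose_add, coeff_rescale, coeff_mk]
  split_ifs with h
  · rw [Nat.add_sub_cancel' h, mul_comm]
  · rw [Nat.choose_eq_zero_of_lt (by omega), Nat.cast_zero, zero_mul]

noncomputable def upperToeplitz (f : R⟦X⟧) (m : ℕ) : Matrix (Fin m) (Fin m) R :=
  Matrix.of fun c s => if (c : ℕ) ≤ s then coeff ((s : ℕ) - c) f else 0

theorem det_upperToeplitz (f : R⟦X⟧) (m : ℕ) :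
    (upperToeplitz f m).det = constantCoeff f ^ m := by
  rw [Matrix.det_of_isUpperTriangular (M := upperToeplitz f m)
    fun c s (h : s < c) => if_neg (not_le.mpr h)]
  simp [upperToeplitz]

theorem of_coeff_mul_mk_pow_pow_eq_confluentVandermonde_mul (f : R⟦X⟧) {m : ℕ}
    (y : Fin m → R) (P : Fin m → ℕ) :
    (Matrix.of fun r s : Fin m => if P r ≤ (s : ℕ) then
        coeff ((s : ℕ) - P r) (f * (mk fun d => y r ^ d) ^ (P r + 1)) else 0) =
      Matrix.confluentVandermonde y P * upperToeplitz f m := by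
  ext r s
  have hs : (s : ℕ) + 1 ≤ m := s.isLt
  -- the entry is the coefficient of `t^s` in `(t^p / (1 - t y)^(p+1)) * f`
  rw [Matrix.of_apply, ← coeff_X_pow_mul', mul_left_comm, mul_comm, coeff_mul,
    Finset.Nat.sum_antidiagonal_eq_sum_range_succ_mk, Matrix.mul_apply]
  simp only [Matrix.confluentVandermonde, upperToeplitz, Matrix.of_apply]
  rw [Fin.sum_univ_eq_sum_range (fun c => ((c.choose (P r) : R) * y r ^ (c - P r)) *
      if c ≤ (s : ℕ) then coeff ((s : ℕ) - c) f else 0),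
    ← Finset.sum_range_add_sum_Ico _ hs,
    Finset.sum_eq_zero (s := Finset.Ico _ _)
      fun c hc => by rw [if_neg (by simp at hc; omega), mul_zero],
    add_zero]
  refine Finset.sum_congr rfl fun c hc => ?_
  rw [if_pos (by simp at hc; omega), coeff_X_pow_mul_mk_pow_pow]

end PowerSeries

open Polynomial Finset

section ChangeOfBasis
variable {R : Type*} [CommRing R]

theorem det_of_apply_X_pow_eq_det_of_apply_monic {m : ℕ} (L : Fin m → R[X] →ₗ[R] R)
    (q : Fin m → R[X]) (hq : ∀ s, (q s).Monic) (hdeg : ∀ s, (q s).natDegree = s) :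
    (Matrix.of fun r s : Fin m => L r (X ^ (s : ℕ))).det =
      (Matrix.of fun r s : Fin m => L r (q s)).det := by
  let B : Matrix (Fin m) (Fin m) R := .of fun c s => (q s).coeff c
  have hB : B.det = 1 := by
    rw [Matrix.det_of_isUpperTriangular (M := B)
      fun c s (h : s < c) => coeff_eq_zero_of_natDegree_lt (by rw [hdeg]; exact h)]
    exact Finset.prod_eq_one fun s _ => by simpa [B, hdeg] using (hq s).coeff_natDegree
  have hmul : (Matrix.of fun r s : Fin m => L r (q s)) =
      (Matrix.of fun r s : Fin m => L r (X ^ (s : ℕ))) * B := by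
    ext r s
    rw [Matrix.of_apply, (q s).as_sum_range' m (by rw [hdeg]; exact s.isLt)]
    simp only [map_sum, Matrix.mul_apply, B, Matrix.of_apply]
    rw [Fin.sum_univ_eq_sum_range (fun c => L r (X ^ c) * (q s).coeff c)]
    refine Finset.sum_congr rfl fun c _ => ?_
    rw [← smul_X_eq_monomial, map_smul, smul_eq_mul, mul_comm]
  rw [hmul, Matrix.det_mul, hB, mul_one]

theorem taylor_coeff_eq_zero_of_X_sub_C_pow_dvd {c : R} {g : R[X]} {j k : ℕ}
    (h : (X - C c) ^ j ∣ g) (hk : k < j) : (taylor c g).coeff k = 0 := by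
  obtain ⟨g, rfl⟩ := h
  have hX : X ^ j ∣ taylor c ((X - C c) ^ j * g) := by
    rw [taylor_mul, taylor_pow, map_sub, taylor_X, taylor_C, add_sub_cancel_right]
    exact dvd_mul_right _ _
  exact X_pow_dvd_iff.mp hX k hk

end ChangeOfBasis

section NewtonBasis
variable {R : Type*} [CommRing R] {n : ℕ} (x : Fin n → R) (α : Fin n → ℕ)

def blockRank (a : Σ i : Fin n, Fin (α i)) : ℕ := ∑ k ∈ Iio a.1, α k + a.2

/-- The Newton basis of Hermite interpolation at the nodes `x` with multiplicities `α`. -/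
noncomputable def newtonBasis (a : Σ i : Fin n, Fin (α i)) : R[X] :=
  (X - C (x a.1)) ^ (a.2 : ℕ) * ∏ k ∈ Iio a.1, (X - C (x k)) ^ α k

variable {α}

theorem blockRank_lt_sum (a : Σ i : Fin n, Fin (α i)) : blockRank α a < ∑ i, α i :=
  calc blockRank α a < ∑ k ∈ Iio a.1, α k + α a.1 := by
        unfold blockRank; have := a.2.isLt; omega
    _ = ∑ k ∈ Iic a.1, α k := by rw [← Iio_insert, sum_insert (by simp), add_comm]
    _ ≤ ∑ i, α i := sum_le_univ_sum_of_nonneg (by simp)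

theorem blockRank_lt_blockRank {a b : Σ i : Fin n, Fin (α i)} (h : toLex a < toLex b) :
    blockRank α a < blockRank α b := by
  obtain ⟨i, p⟩ := a
  obtain ⟨j, q⟩ := b
  rcases h with ⟨_, _, hij⟩ | ⟨_, _, hpq⟩
  · calc blockRank α ⟨i, p⟩ < ∑ k ∈ Iic i, α k := by
          rw [← Iio_insert, sum_insert (by simp)]
          unfold blockRank; have := p.isLt; dsimp only; omega
      _ ≤ ∑ k ∈ Iio j, α k :=
          sum_le_sum_of_subset fun k hk => mem_Iio.mpr ((mem_Iic.mp hk).trans_lt hij)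
      _ ≤ blockRank α ⟨j, q⟩ := Nat.le_add_right _ _
  · exact Nat.add_lt_add_left hpq _

theorem monic_newtonBasis (a : Σ i : Fin n, Fin (α i)) : (newtonBasis x α a).Monic :=
  ((monic_X_sub_C _).pow _).mul (monic_prod_of_monic _ _ fun _ _ => (monic_X_sub_C _).pow _)

theorem natDegree_newtonBasis [Nontrivial R] (a : Σ i : Fin n, Fin (α i)) :
    (newtonBasis x α a).natDegree = blockRank α a := by
  rw [newtonBasis, ((monic_X_sub_C _).pow _).natDegree_mul
    (monic_prod_of_monic _ _ fun _ _ => (monic_X_sub_C _).pow _),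
    natDegree_prod_of_monic _ _ fun _ _ => (monic_X_sub_C _).pow _]
  simp [blockRank, add_comm, (monic_X_sub_C _).natDegree_pow]

theorem taylor_newtonBasis_coeff_of_lt {a b : Σ i : Fin n, Fin (α i)} (h : toLex a < toLex b) :
    (taylor (x a.1) (newtonBasis x α b)).coeff a.2 = 0 := by
  obtain ⟨i, p⟩ := a
  obtain ⟨j, q⟩ := b
  rcases h with ⟨_, _, hij⟩ | ⟨_, _, hpq⟩
  · exact taylor_coeff_eq_zero_of_X_sub_C_pow_dvd
      (dvd_mul_of_dvd_right (dvd_prod_of_mem _ (mem_Iio.mpr hij)) _) p.isLt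
  · exact taylor_coeff_eq_zero_of_X_sub_C_pow_dvd (dvd_mul_right _ _) hpq

theorem taylor_newtonBasis_coeff_self (a : Σ i : Fin n, Fin (α i)) :
    (taylor (x a.1) (newtonBasis x α a)).coeff a.2 = ∏ k ∈ Iio a.1, (x a.1 - x k) ^ α k := by
  rw [newtonBasis, taylor_mul, taylor_pow, map_sub, taylor_X, taylor_C, add_sub_cancel_right,
    coeff_X_pow_mul', if_pos le_rfl, Nat.sub_self, taylor_coeff_zero, eval_prod]
  simp

end NewtonBasis

section BlockOrder
variable {n m : ℕ} {α : Fin n → ℕ} {e : (Σ i : Fin n, Fin (α i)) ≃ Fin m}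

theorem toLex_symm_lt_toLex_symm (he : StrictMono fun a : Σₗ i, Fin (α i) => e (ofLex a))
    {r s : Fin m} (h : r < s) : toLex (e.symm r) < toLex (e.symm s) :=
  he.lt_iff_lt.mp (by simpa using h)

theorem blockRank_symm_apply (hm : m = ∑ i, α i)
    (he : StrictMono fun a : Σₗ i, Fin (α i) => e (ofLex a)) (r : Fin m) :
    blockRank α (e.symm r) = r := by
  let g : Fin m → Fin m :=
    fun r => ⟨blockRank α (e.symm r), (blockRank_lt_sum _).trans_eq hm.symm⟩
  have hg : StrictMono g := fun r s h => blockRank_lt_blockRank (toLex_symm_lt_toLex_symm he h)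
  exact congrArg Fin.val hg.apply_eq

end BlockOrder

section Determinant
variable {R : Type*} [CommRing R]

theorem det_confluentVandermonde {n m : ℕ} (x : Fin n → R) (α : Fin n → ℕ)
    (hm : m = ∑ i, α i) (e : (Σ i : Fin n, Fin (α i)) ≃ Fin m)
    (he : StrictMono fun a : Σₗ i, Fin (α i) => e (ofLex a)) :
    (Matrix.confluentVandermonde (fun r => x (e.symm r).1) (fun r => (e.symm r).2)).det =
      ∏ r, ∏ k ∈ Iio (e.symm r).1, (x (e.symm r).1 - x k) ^ α k := by
  nontriviality R
  let L : Fin m → R[X] →ₗ[R] R :=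
    fun r => (lcoeff R (e.symm r).2).comp (taylor (x (e.symm r).1))
  have hV : Matrix.confluentVandermonde (fun r => x (e.symm r).1) (fun r => (e.symm r).2) =
      Matrix.of fun r s : Fin m => L r (X ^ (s : ℕ)) := by
    ext r s
    simp [L, Matrix.confluentVandermonde, coeff_X_add_C_pow, mul_comm]
  rw [hV, det_of_apply_X_pow_eq_det_of_apply_monic L (fun s => newtonBasis x α (e.symm s))
    (fun s => monic_newtonBasis x _) (fun s => (natDegree_newtonBasis x _).trans
      (blockRank_symm_apply hm he s))]
  refine (Matrix.det_of_isLowerTriangular _ fun r s (h : r < s) => ?_).trans ?_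
  · exact taylor_newtonBasis_coeff_of_lt x (toLex_symm_lt_toLex_symm he h)
  · exact prod_congr rfl fun r _ => taylor_newtonBasis_coeff_self x _

theorem prod_sigma_prod_Iio_eq {n : ℕ} (x : Fin n → R) (α : Fin n → ℕ) :
    ∏ a : Σ i : Fin n, Fin (α i), ∏ k ∈ Iio a.1, (x a.1 - x k) ^ α k =
      ∏ p ∈ univ.filter (fun p : Fin n × Fin n => p.1 < p.2),
        (x p.2 - x p.1) ^ (α p.1 * α p.2) := by
  rw [← univ_sigma_univ, prod_sigma, prod_filter, Fintype.prod_prod_type, prod_comm]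
  refine prod_congr rfl fun j _ => ?_
  dsimp only
  rw [prod_const, card_univ, Fintype.card_fin, ← prod_pow, ← prod_filter]
  exact prod_congr (by ext; simp) fun k _ => by rw [← pow_mul]

end Determinant

theorem power_series_vandermonde_general {R : Type*} [CommRing R] {n : ℕ}
    (f : PowerSeries R) (hf : PowerSeries.constantCoeff f = 1)
    (α : Fin n → ℕ) (m : ℕ) (hm : m = ∑ i, α i) (x : Fin n → R)
    (e : (Σ i : Fin n, Fin (α i)) ≃ Fin m)
    (he : ∀ a b : Σ i : Fin n, Fin (α i),
      ((a.1 : ℕ) < b.1 ∨ ((a.1 : ℕ) = b.1 ∧ (a.2 : ℕ) < (b.2 : ℕ))) → e a < e b) :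
    (Matrix.of fun r s : Fin m =>
        if ((e.symm r).2 : ℕ) ≤ (s : ℕ) then
          PowerSeries.coeff ((s : ℕ) - ((e.symm r).2 : ℕ))
            (f * (PowerSeries.mk fun d => x (e.symm r).1 ^ d) ^ (((e.symm r).2 : ℕ) + 1))
        else 0).det =
      ∏ p ∈ Finset.univ.filter (fun p : Fin n × Fin n => p.1 < p.2),
        (x p.2 - x p.1) ^ (α p.1 * α p.2) := by
  have he' : StrictMono fun a : Σₗ i, Fin (α i) => e (ofLex a) := by
    rintro _ _ (⟨_, _, h⟩ | ⟨_, _, h⟩)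
    exacts [he _ _ (Or.inl h), he _ _ (Or.inr ⟨rfl, h⟩)]
  rw [PowerSeries.of_coeff_mul_mk_pow_pow_eq_confluentVandermonde_mul f
      (fun r => x (e.symm r).1) (fun r => (e.symm r).2),
    Matrix.det_mul, PowerSeries.det_upperToeplitz, hf, one_pow, mul_one,
    det_confluentVandermonde x α hm e he',
    e.symm.prod_comp fun a => ∏ k ∈ Iio a.1, (x a.1 - x k) ^ α k,
    prod_sigma_prod_Iio_eq]

/-- Appendix theorem: for a formal power series `f` with `f(0) = 1` and `αᵢ ≥ 1`,
the `m×m` block matrix whose block for `xᵢ` has `(r,s)`-entry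
`[t^{s−r}] f(t)/(1−t·xᵢ)^r` (1-based; coefficients of negative powers are `0`,
and `1/(1−t·xᵢ)` is the geometric series `∑ xᵢ^d t^d`), with rows ordered block
by block, has determinant `∏_{i<j} (xⱼ − xᵢ)^{αᵢαⱼ}`. -/
theorem power_series_vandermonde {R : Type*} [CommRing R] {n : ℕ}
    (f : PowerSeries R) (hf : PowerSeries.constantCoeff f = 1)
    (α : Fin n → ℕ) (hα : ∀ i, 1 ≤ α i) (m : ℕ) (hm : m = ∑ i, α i) (x : Fin n → R)
    (e : (Σ i : Fin n, Fin (α i)) ≃ Fin m)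
    (he : ∀ a b : Σ i : Fin n, Fin (α i),
      ((a.1 : ℕ) < b.1 ∨ ((a.1 : ℕ) = b.1 ∧ (a.2 : ℕ) < (b.2 : ℕ))) → e a < e b) :
    (Matrix.of fun r s : Fin m =>
        if ((e.symm r).2 : ℕ) ≤ (s : ℕ) then
          PowerSeries.coeff ((s : ℕ) - ((e.symm r).2 : ℕ))
            (f * (PowerSeries.mk fun d => x (e.symm r).1 ^ d) ^ (((e.symm r).2 : ℕ) + 1))
        else 0).det =
      ∏ p ∈ Finset.univ.filter (fun p : Fin n × Fin n => p.1 < p.2),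
        (x p.2 - x p.1) ^ (α p.1 * α p.2) :=
  power_series_vandermonde_general f hf α m hm x e he
end

section
/- Let α = (α₁,…,αₙ) with αᵢ ≥ 1, and let G_X(α) be the DAG with vertices u₁,…,uₙ and w_{i,j,k} for 1 ≤ i < j ≤ n and k ∈ [αᵢαⱼ], and edges u_{i+1}→uᵢ and uⱼ→w_{i,j,k}→uᵢ. Let N = n + Σ_{i<j} αᵢαⱼ. Fix p₁ < p₂ < ⋯ < pₙ in [N]. Then the number of topological orderings f of G_X(α) with f(uᵢ) = pᵢ for all i equals the signed sum, over all choices for each w_{i,j,k} of either the factor xⱼ or −xᵢ in the expansion of ∏_{i<j}(xⱼ − xᵢ)^{αᵢαⱼ}, of the number of ways to assign the remaining N−n labels to lists L₁,…,Lₙ, where Lᵢ is a sequence of cᵢ distinct labels all less than pᵢ (cᵢ being the exponent of xᵢ in the chosen monomial), each term carrying the sign equal to the product of the chosen signs. -/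
/-- The middle vertices `w_{i,j,k}` (`1 ≤ i < j ≤ n`, `k ∈ [αᵢαⱼ]`) of the graph `G_X(α)`. -/
def WX (n : ℕ) (α : Fin n → ℕ) :=
  Σ p : {p : Fin n × Fin n // p.1 < p.2}, Fin (α p.1.1 * α p.1.2)

instance (n : ℕ) (α : Fin n → ℕ) : Fintype (WX n α) := by unfold WX; infer_instance
instance (n : ℕ) (α : Fin n → ℕ) : DecidableEq (WX n α) := by unfold WX; infer_instance

/-- The vertex set of `G_X(α)`: the diagonal vertices `u₁,…,uₙ` and the `w_{i,j,k}`. -/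
def VX (n : ℕ) (α : Fin n → ℕ) := Fin n ⊕ WX n α

instance (n : ℕ) (α : Fin n → ℕ) : Fintype (VX n α) := by unfold VX; infer_instance

/-- The edge relation of `G_X(α)`: `u_{i+1} → u_i` and `u_j → w_{i,j,k} → u_i`. -/
def EX (n : ℕ) (α : Fin n → ℕ) : VX n α → VX n α → Prop
  | Sum.inl i, Sum.inl i' => (i : ℕ) = (i' : ℕ) + 1
  | Sum.inl j, Sum.inr w => j = w.1.1.2
  | Sum.inr w, Sum.inl i => w.1.1.1 = i
  | _, _ => False

section Aux
variable {n : ℕ} {α : Fin n → ℕ}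

/-- target index of a choice -/
def tgt (ε : WX n α → Bool) (w : WX n α) : Fin n :=
  if ε w then w.1.1.2 else w.1.1.1

instance restFintype (N : ℕ) (p : Fin n → ℕ) :
    Fintype {m : ℕ // m ∈ Finset.Icc 1 N ∧ ∀ i, m ≠ p i} :=
  Fintype.subtype ((Finset.Icc 1 N).filter (fun m => ∀ i, m ≠ p i)) (by simp)

lemma card_rest (N : ℕ) (p : Fin n → ℕ) (hp : Function.Injective p)
    (hpN : ∀ i, p i ∈ Finset.Icc 1 N) :
    Fintype.card {m : ℕ // m ∈ Finset.Icc 1 N ∧ ∀ i, m ≠ p i} = N - n := by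
  classical
  rw [Fintype.card_of_subtype ((Finset.Icc 1 N).filter (fun m => ∀ i, m ≠ p i)) (by simp)]
  have h : (Finset.Icc 1 N).filter (fun m => ∀ i, m ≠ p i)
      = Finset.Icc 1 N \ Finset.image p Finset.univ := by
    ext m
    simp only [Finset.mem_filter, Finset.mem_sdiff, Finset.mem_image, Finset.mem_univ,
      true_and, not_exists]
    constructor
    · rintro ⟨h1, h2⟩; exact ⟨h1, fun i hi => h2 i hi.symm⟩
    · rintro ⟨h1, h2⟩; exact ⟨h1, fun i hi => h2 i hi.symm⟩
  rw [h, Finset.card_sdiff_of_subset]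
  · rw [Finset.card_image_of_injective _ hp]
    simp [Nat.card_Icc]
  · intro m hm
    simp only [Finset.mem_image, Finset.mem_univ, true_and] at hm
    obtain ⟨i, rfl⟩ := hm
    exact hpN i

lemma card_WX_eq (N : ℕ)
    (hN : N = n + ∑ q ∈ Finset.univ.filter (fun q : Fin n × Fin n => q.1 < q.2),
      α q.1 * α q.2) :
    Fintype.card (WX n α) = N - n := by
  classical
  have h1 : Fintype.card (WX n α)
      = ∑ q : {q : Fin n × Fin n // q.1 < q.2}, α q.1.1 * α q.1.2 := by
    show Fintype.card (Σ q : {q : Fin n × Fin n // q.1 < q.2}, Fin (α q.1.1 * α q.1.2)) = _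
    simp [Fintype.card_sigma]
  rw [h1, ← Finset.sum_subtype (Finset.univ.filter (fun q : Fin n × Fin n => q.1 < q.2))
    (fun q => by simp) (fun q : Fin n × Fin n => α q.1 * α q.2)]
  omega

lemma card_VX_eq (N : ℕ)
    (hN : N = n + ∑ q ∈ Finset.univ.filter (fun q : Fin n × Fin n => q.1 < q.2),
      α q.1 * α q.2) :
    Fintype.card (VX n α) = N := by
  have h1 : Fintype.card (VX n α) = n + Fintype.card (WX n α) := by
    show Fintype.card (Fin n ⊕ WX n α) = _
    simp [Fintype.card_sum]
  rw [h1, card_WX_eq N hN]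
  omega

end Aux

section Step1
variable {n : ℕ} {α : Fin n → ℕ}

lemma card_B_eq_card_C (N : ℕ) (p : Fin n → ℕ) (ε : WX n α → Bool) :
    Nat.card {φ : (Σ i : Fin n,
        Fin ((Finset.univ.filter (fun w : WX n α => tgt ε w = i)).card)) ≃
        {m : ℕ // m ∈ Finset.Icc 1 N ∧ ∀ i, m ≠ p i} // ∀ s, ((φ s) : ℕ) < p s.1}
    = Nat.card {ψ : WX n α ≃ {m : ℕ // m ∈ Finset.Icc 1 N ∧ ∀ i, m ≠ p i} //
        ∀ w, ((ψ w) : ℕ) < p (tgt ε w)} := by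
  classical
  have hfib : ∀ i : Fin n, Fintype.card {w : WX n α // tgt ε w = i}
      = (Finset.univ.filter (fun w : WX n α => tgt ε w = i)).card :=
    fun i => Fintype.card_subtype _
  let e : (Σ i : Fin n,
      Fin ((Finset.univ.filter (fun w : WX n α => tgt ε w = i)).card)) ≃ WX n α :=
    (Equiv.sigmaCongrRight fun i => (Fintype.equivFinOfCardEq (hfib i)).symm).trans
      (Equiv.sigmaFiberEquiv (tgt ε))
  have he : ∀ s, tgt ε (e s) = s.1 := by
    rintro ⟨i, k⟩
    exact ((Fintype.equivFinOfCardEq (hfib i)).symm k).2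
  apply Nat.card_congr
  refine Equiv.subtypeEquiv (e.equivCongr (Equiv.refl _)) ?_
  intro φ
  constructor
  · intro h w
    rw [Equiv.equivCongr_apply_apply, Equiv.refl_apply]
    rw [show tgt ε w = (e.symm w).1 by rw [← he (e.symm w), e.apply_symm_apply]]
    exact h _
  · intro h s
    have := h (e s)
    rw [Equiv.equivCongr_apply_apply, Equiv.refl_apply, e.symm_apply_apply, he] at this
    exact this

end Step1

section Step3
variable {n : ℕ} {α : Fin n → ℕ}

lemma card_A_eq_card_D (N : ℕ)
    (hN : N = n + ∑ q ∈ Finset.univ.filter (fun q : Fin n × Fin n => q.1 < q.2),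
      α q.1 * α q.2)
    (p : Fin n → ℕ) (hp : StrictMono p) (hpN : ∀ i, p i ∈ Finset.Icc 1 N) :
    Nat.card {f : VX n α ≃ Fin (Fintype.card (VX n α)) //
        (∀ u v, EX n α u v → f v < f u) ∧ ∀ i, ((f (Sum.inl i)) : ℕ) + 1 = p i}
    = Nat.card {ψ : WX n α ≃ {m : ℕ // m ∈ Finset.Icc 1 N ∧ ∀ i, m ≠ p i} //
        ∀ w, p w.1.1.1 < ((ψ w) : ℕ) ∧ ((ψ w) : ℕ) < p w.1.1.2} := by
  classical
  have hMN : Fintype.card (VX n α) = N := card_VX_eq N hN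
  have hW : Fintype.card (WX n α) = N - n := card_WX_eq N hN
  have hp1 : ∀ i, 1 ≤ p i := fun i => (Finset.mem_Icc.1 (hpN i)).1
  have hpN' : ∀ i, p i ≤ N := fun i => (Finset.mem_Icc.1 (hpN i)).2
  have hR : Fintype.card {m : ℕ // m ∈ Finset.Icc 1 N ∧ ∀ i, m ≠ p i} = N - n :=
    card_rest N p hp.injective hpN
  -- the underlying map on W
  have gmem : ∀ (f : VX n α ≃ Fin (Fintype.card (VX n α))) (w : WX n α),
      ((f (Sum.inr w) : ℕ) + 1) ∈ Finset.Icc 1 N := by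
    intro f w
    have h := (f (Sum.inr w)).isLt
    simp only [Finset.mem_Icc]
    omega
  set A := {f : VX n α ≃ Fin (Fintype.card (VX n α)) //
      (∀ u v, EX n α u v → f v < f u) ∧ ∀ i, ((f (Sum.inl i)) : ℕ) + 1 = p i} with hA
  have gne : ∀ (x : A) (w : WX n α) (i : Fin n), ((x.1 (Sum.inr w) : ℕ) + 1) ≠ p i := by
    intro x w i hi
    have hd := x.2.2 i
    have : x.1 (Sum.inr w) = x.1 (Sum.inl i) := Fin.ext (by omega)
    exact absurd (x.1.injective this) (by simp)
  let g : A → WX n α → {m : ℕ // m ∈ Finset.Icc 1 N ∧ ∀ i, m ≠ p i} :=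
    fun x w => ⟨(x.1 (Sum.inr w) : ℕ) + 1, gmem x.1 w, gne x w⟩
  have gbij : ∀ x : A, Function.Bijective (g x) := by
    intro x
    rw [Fintype.bijective_iff_injective_and_card]
    constructor
    · intro w w' h
      have h2 : (x.1 (Sum.inr w) : ℕ) + 1 = (x.1 (Sum.inr w') : ℕ) + 1 :=
        congrArg Subtype.val h
      have : x.1 (Sum.inr w) = x.1 (Sum.inr w') := Fin.ext (by omega)
      exact Sum.inr.inj (x.1.injective this)
    · rw [hW, hR]
  have gcond : ∀ (x : A) (w : WX n α),
      p w.1.1.1 < ((g x w) : ℕ) ∧ ((g x w) : ℕ) < p w.1.1.2 := by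
    intro x w
    have h1 : x.1 (Sum.inl w.1.1.1) < x.1 (Sum.inr w) :=
      x.2.1 (Sum.inr w) (Sum.inl w.1.1.1) rfl
    have h2 : x.1 (Sum.inr w) < x.1 (Sum.inl w.1.1.2) :=
      x.2.1 (Sum.inl w.1.1.2) (Sum.inr w) rfl
    have e1 := x.2.2 w.1.1.1
    have e2 := x.2.2 w.1.1.2
    rw [Fin.lt_def] at h1 h2
    constructor <;> [skip; skip] <;> simp only [g] <;> omega
  let F : A → {ψ : WX n α ≃ {m : ℕ // m ∈ Finset.Icc 1 N ∧ ∀ i, m ≠ p i} //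
      ∀ w, p w.1.1.1 < ((ψ w) : ℕ) ∧ ((ψ w) : ℕ) < p w.1.1.2} :=
    fun x => ⟨Equiv.ofBijective (g x) (gbij x), fun w => by
      simpa only [Equiv.ofBijective_apply] using gcond x w⟩
  apply Nat.card_eq_of_bijective F
  constructor
  · -- injective
    intro x y h
    have h2 : ∀ w, g x w = g y w := by
      intro w
      have := congrArg Subtype.val h
      simp only [Equiv.ext_iff, Equiv.ofBijective_apply] at this
      exact this w
    refine Subtype.ext (Equiv.ext fun v => ?_)
    match v with
    | Sum.inl i =>
      have := x.2.2 i; have := y.2.2 i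
      exact Fin.ext (by omega)
    | Sum.inr w =>
      have h3 : ((x.1 (Sum.inr w) : ℕ) + 1) = ((y.1 (Sum.inr w) : ℕ) + 1) :=
        congrArg Subtype.val (h2 w)
      exact Fin.ext (by omega)
  · -- surjective
    rintro ⟨ψ, hψ⟩
    have hval : ∀ w : WX n α, 1 ≤ (ψ w : ℕ) ∧ (ψ w : ℕ) ≤ N := by
      intro w
      have := (ψ w).2.1
      rw [Finset.mem_Icc] at this
      exact this
    -- build the topological ordering
    have hbij : Function.Bijective
        (Sum.elim (fun i => (⟨p i - 1, by have := hp1 i; have := hpN' i; omega⟩ :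
            Fin (Fintype.card (VX n α))))
          (fun w : WX n α => (⟨(ψ w : ℕ) - 1, by have := hval w; omega⟩ :
            Fin (Fintype.card (VX n α))))) := by
      rw [Fintype.bijective_iff_injective_and_card]
      refine ⟨?_, by
        simp only [Fintype.card_sum, Fintype.card_fin]
        omega⟩
      intro v v' h
      match v, v' with
      | Sum.inl i, Sum.inl i' =>
        have h2 : p i - 1 = p i' - 1 := congrArg Fin.val h
        have := hp1 i; have := hp1 i'
        exact congrArg Sum.inl (hp.injective (by omega))
      | Sum.inl i, Sum.inr w =>
        have h2 : p i - 1 = (ψ w : ℕ) - 1 := congrArg Fin.val h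
        have := hp1 i; have := (hval w).1
        exact absurd (by omega : (ψ w : ℕ) = p i) ((ψ w).2.2 i)
      | Sum.inr w, Sum.inl i =>
        have h2 : (ψ w : ℕ) - 1 = p i - 1 := congrArg Fin.val h
        have := hp1 i; have := (hval w).1
        exact absurd (by omega : (ψ w : ℕ) = p i) ((ψ w).2.2 i)
      | Sum.inr w, Sum.inr w' =>
        have h2 : (ψ w : ℕ) - 1 = (ψ w' : ℕ) - 1 := congrArg Fin.val h
        have := (hval w).1; have := (hval w').1
        exact congrArg Sum.inr (ψ.injective (Subtype.ext (by omega)))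
    set f : VX n α ≃ Fin (Fintype.card (VX n α)) := Equiv.ofBijective _ hbij with hfdef
    have hfl : ∀ i, (f (Sum.inl i) : ℕ) = p i - 1 := fun i => rfl
    have hfr : ∀ w, (f (Sum.inr w) : ℕ) = (ψ w : ℕ) - 1 := fun w => rfl
    have htopo : ∀ u v, EX n α u v → f v < f u := by
      intro u v hE
      match u, v with
      | Sum.inl i, Sum.inl i' =>
        have h' : (i : ℕ) = (i' : ℕ) + 1 := hE
        have hlt : p i' < p i := hp (by rw [Fin.lt_def]; omega)
        rw [Fin.lt_def, hfl, hfl]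
        have := hp1 i'
        omega
      | Sum.inl j, Sum.inr w =>
        have h' : j = w.1.1.2 := hE
        subst h'
        have := hψ w
        have := hp1 w.1.1.1
        rw [Fin.lt_def, hfl, hfr]
        omega
      | Sum.inr w, Sum.inl i =>
        have h' : w.1.1.1 = i := hE
        subst h'
        have := hψ w
        have := hp1 w.1.1.1
        rw [Fin.lt_def, hfl, hfr]
        omega
      | Sum.inr w, Sum.inr w' => exact False.elim hE
    have hdiag : ∀ i, ((f (Sum.inl i)) : ℕ) + 1 = p i := by
      intro i
      rw [hfl]
      have := hp1 i
      omega
    refine ⟨⟨f, htopo, hdiag⟩, ?_⟩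
    refine Subtype.ext (Equiv.ext fun w => Subtype.ext ?_)
    show ((f (Sum.inr w) : ℕ) + 1) = (ψ w : ℕ)
    rw [hfr]
    have := (hval w).1
    omega

end Step3

section Step2
variable {n : ℕ} {α : Fin n → ℕ}

lemma step2 (N : ℕ) (p : Fin n → ℕ) (hp : StrictMono p) :
    (∑ ε : WX n α → Bool,
      (-1 : ℤ) ^ ((Finset.univ.filter (fun w => ε w = false)).card) *
        (Nat.card {ψ : WX n α ≃ {m : ℕ // m ∈ Finset.Icc 1 N ∧ ∀ i, m ≠ p i} //
          ∀ w, ((ψ w) : ℕ) < p (tgt ε w)} : ℤ))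
    = (Nat.card {ψ : WX n α ≃ {m : ℕ // m ∈ Finset.Icc 1 N ∧ ∀ i, m ≠ p i} //
        ∀ w, p w.1.1.1 < ((ψ w) : ℕ) ∧ ((ψ w) : ℕ) < p w.1.1.2} : ℤ) := by
  classical
  set R := {m : ℕ // m ∈ Finset.Icc 1 N ∧ ∀ i, m ≠ p i} with hR
  have hcard : ∀ ε : WX n α → Bool,
      (Nat.card {ψ : WX n α ≃ R // ∀ w, ((ψ w) : ℕ) < p (tgt ε w)} : ℤ)
      = ∑ ψ : WX n α ≃ R,
          ∏ w : WX n α, (if ((ψ w) : ℕ) < p (tgt ε w) then (1 : ℤ) else 0) := by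
    intro ε
    rw [Nat.card_eq_fintype_card, Fintype.card_subtype, ← Finset.sum_boole]
    apply Finset.sum_congr rfl
    intro ψ _
    rw [Finset.prod_boole]
    simp only [Finset.mem_univ, true_implies]
  have hsign : ∀ ε : WX n α → Bool,
      (-1 : ℤ) ^ ((Finset.univ.filter (fun w => ε w = false)).card)
      = ∏ w : WX n α, (if ε w then (1 : ℤ) else -1) := by
    intro ε
    rw [Finset.prod_ite, Finset.prod_const, Finset.prod_const, one_pow, one_mul]
    congr 2
    apply Finset.filter_congr
    intro w _
    simp
  calc
    ∑ ε : WX n α → Bool,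
        (-1 : ℤ) ^ ((Finset.univ.filter (fun w => ε w = false)).card) *
          (Nat.card {ψ : WX n α ≃ R // ∀ w, ((ψ w) : ℕ) < p (tgt ε w)} : ℤ)
      = ∑ ε : WX n α → Bool, ∑ ψ : WX n α ≃ R, ∏ w : WX n α,
          ((if ε w then (1 : ℤ) else -1) *
            (if ((ψ w) : ℕ) < p (tgt ε w) then (1 : ℤ) else 0)) := by
        apply Finset.sum_congr rfl
        intro ε _
        rw [hcard, hsign, Finset.mul_sum]
        apply Finset.sum_congr rfl
        intro ψ _
        rw [← Finset.prod_mul_distrib]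
    _ = ∑ ψ : WX n α ≃ R, ∑ ε : WX n α → Bool, ∏ w : WX n α,
          (fun (w : WX n α) (b : Bool) =>
            if b then (if ((ψ w) : ℕ) < p w.1.1.2 then (1 : ℤ) else 0)
            else -(if ((ψ w) : ℕ) < p w.1.1.1 then (1 : ℤ) else 0)) w (ε w) := by
        rw [Finset.sum_comm]
        apply Finset.sum_congr rfl
        intro ψ _
        apply Finset.sum_congr rfl
        intro ε _
        apply Finset.prod_congr rfl
        intro w _
        simp only [tgt]
        by_cases hb : ε w = true <;> by_cases hc1 : ((ψ w) : ℕ) < p w.1.1.1 <;>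
          by_cases hc2 : ((ψ w) : ℕ) < p w.1.1.2 <;> simp [hb, hc1, hc2]
    _ = ∑ ψ : WX n α ≃ R, ∏ w : WX n α,
          ((if ((ψ w) : ℕ) < p w.1.1.2 then (1 : ℤ) else 0)
            + -(if ((ψ w) : ℕ) < p w.1.1.1 then (1 : ℤ) else 0)) := by
        apply Finset.sum_congr rfl
        intro ψ _
        rw [show (Finset.univ : Finset (WX n α → Bool))
            = Fintype.piFinset (fun _ => Finset.univ) from (Fintype.piFinset_univ).symm]
        rw [← Finset.prod_univ_sum (fun _ : WX n α => (Finset.univ : Finset Bool))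
            (fun (w : WX n α) (b : Bool) =>
              if b then (if ((ψ w) : ℕ) < p w.1.1.2 then (1 : ℤ) else 0)
              else -(if ((ψ w) : ℕ) < p w.1.1.1 then (1 : ℤ) else 0))]
        apply Finset.prod_congr rfl
        intro w _
        rw [Fintype.sum_bool]
        simp
    _ = ∑ ψ : WX n α ≃ R, ∏ w : WX n α,
          (if (p w.1.1.1 < ((ψ w) : ℕ) ∧ ((ψ w) : ℕ) < p w.1.1.2)
            then (1 : ℤ) else 0) := by
        apply Finset.sum_congr rfl
        intro ψ _
        apply Finset.prod_congr rfl
        intro w _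
        have hw : p w.1.1.1 < p w.1.1.2 := hp w.1.2
        have hne : ((ψ w) : ℕ) ≠ p w.1.1.1 := (ψ w).2.2 w.1.1.1
        rcases lt_trichotomy ((ψ w : ℕ)) (p w.1.1.1) with h1 | h1 | h1
        · rw [if_pos (by omega), if_pos (by omega), if_neg (by omega)]
          norm_num
        · exact absurd h1 hne
        · by_cases h2 : ((ψ w) : ℕ) < p w.1.1.2
          · rw [if_pos h2, if_neg (by omega), if_pos ⟨h1, h2⟩]
            norm_num
          · rw [if_neg h2, if_neg (by omega), if_neg (fun h => h2 h.2)]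
            norm_num
    _ = ∑ ψ : WX n α ≃ R,
          (if (∀ w : WX n α, p w.1.1.1 < ((ψ w) : ℕ) ∧ ((ψ w) : ℕ) < p w.1.1.2)
            then (1 : ℤ) else 0) := by
        apply Finset.sum_congr rfl
        intro ψ _
        rw [Finset.prod_boole]
        simp only [Finset.mem_univ, true_implies]
    _ = (Nat.card {ψ : WX n α ≃ R //
          ∀ w, p w.1.1.1 < ((ψ w) : ℕ) ∧ ((ψ w) : ℕ) < p w.1.1.2} : ℤ) := by
        rw [Nat.card_eq_fintype_card, Fintype.card_subtype, ← Finset.sum_boole]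

end Step2

/-- Lemma `lemmaTrick`: with labels `1,…,N` (`N = n + Σ_{i<j} αᵢαⱼ`) and fixed increasing
diagonal labels `p₁ < ⋯ < pₙ`, the number of topological orderings `f` of `G_X(α)` with
`f(uᵢ) = pᵢ` equals the signed sum, over all choices `ε` assigning to each `w_{i,j,k}`
either the factor `xⱼ` (`ε w = true`) or `−xᵢ` (`ε w = false`), of
`(−1)^{#{w : ε w = false}}` times the number of ways to arrange the remaining `N − n`
labels into lists `L₁,…,Lₙ` with `|Lᵢ| = cᵢ(ε)` (the number of factors choosing variable
`i`), all entries of `Lᵢ` being `< pᵢ`; such an arrangement is a bijection `φ` from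
`Σᵢ Fin(cᵢ(ε))` to the unused labels with `φ(i,·) < pᵢ`. -/
theorem lemma_trick (n : ℕ) (α : Fin n → ℕ) (hα : ∀ i, 1 ≤ α i)
    (N : ℕ)
    (hN : N = n + ∑ p ∈ Finset.univ.filter (fun p : Fin n × Fin n => p.1 < p.2),
      α p.1 * α p.2)
    (p : Fin n → ℕ) (hp : StrictMono p) (hpN : ∀ i, p i ∈ Finset.Icc 1 N) :
    (Nat.card {f : VX n α ≃ Fin (Fintype.card (VX n α)) //
        (∀ u v, EX n α u v → f v < f u) ∧ ∀ i, ((f (Sum.inl i)) : ℕ) + 1 = p i} : ℤ) =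
      ∑ ε : WX n α → Bool,
        (-1 : ℤ) ^ ((Finset.univ.filter (fun w => ε w = false)).card) *
          (Nat.card {φ : (Σ i : Fin n,
              Fin ((Finset.univ.filter
                (fun w : WX n α => (if ε w then w.1.1.2 else w.1.1.1) = i)).card)) ≃
              {m : ℕ // m ∈ Finset.Icc 1 N ∧ ∀ i, m ≠ p i} //
            ∀ s, ((φ s) : ℕ) < p s.1} : ℤ) := by
  classical
  have h1 := card_A_eq_card_D (α := α) N hN p hp hpN
  have h2 := step2 (α := α) N p hp
  rw [h1, ← h2]
  apply Finset.sum_congr rfl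
  intro ε _
  congr 1
  exact congrArg (fun k : ℕ => (k : ℤ)) (card_B_eq_card_C N p ε).symm
end
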